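/- Let T be the unit regular tetrahedron in ℝ³. For every α with 0 ≤ α ≤ 1, setting β = (1−α)/2, the volume of the Minkowski sum α•T + β•(−T) equals [α³ + (9/2)α²(1−α) + (9/4)α(1−α)² + (1/8)(1−α)³] · vol(T), where vol(T) = √2/12. -/

import Mathlib

/-!
`T` is the image of the corner simplex `Δ = {x ∈ ℝ³ | 0 ≤ x, ∑ xᵢ ≤ 1}` under a linear map of
determinant `√2 / 2`, so everything reduces to `Δ`. Splitting vectors into positive and negative
parts gives `a • Δ + b • (-Δ) = {x | ∑ xᵢ⁺ ≤ a, ∑ xᵢ⁻ ≤ b}`. Slicing this set along the first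
coordinate `t` leaves the set of the same kind one dimension lower with parameters
`(a - t⁺, b - t⁻)`, so its volume satisfies `Vₙ₊₁(a, b) = ∫₀ᵃ Vₙ(t, b) dt + ∫₀ᵇ Vₙ(a, t) dt`,
whence `V₃(a, b) = (a³ + 9a²b + 9ab² + b³) / 6`.
-/

open scoped Pointwise
open MeasureTheory

/-- The unit regular tetrahedron in `ℝ³`. -/
noncomputable def T : Set (EuclideanSpace ℝ (Fin 3)) :=
  convexHull ℝ {!₂[0, 0, 0], !₂[1, 0, 0], !₂[1/2, Real.sqrt 3 / 2, 0],
    !₂[1/2, Real.sqrt 3 / 6, Real.sqrt (2/3)]}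

open Set

def cornerSimplex (ι : Type*) [Fintype ι] (c : ℝ) : Set (ι → ℝ) :=
  {x | (∀ i, 0 ≤ x i) ∧ ∑ i, x i ≤ c}

def posNegSimplex (ι : Type*) [Fintype ι] (a b : ℝ) : Set (ι → ℝ) :=
  {x | ∑ i, (x i)⁺ ≤ a ∧ ∑ i, (x i)⁻ ≤ b}

section

variable {ι : Type*} [Fintype ι]

theorem convex_cornerSimplex (c : ℝ) : Convex ℝ (cornerSimplex ι c) := by
  rintro x ⟨hx0, hxs⟩ y ⟨hy0, hys⟩ s t hs ht hst
  refine ⟨fun i => add_nonneg (mul_nonneg hs (hx0 i)) (mul_nonneg ht (hy0 i)), ?_⟩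
  simp only [Pi.add_apply, Pi.smul_apply, smul_eq_mul, Finset.sum_add_distrib,
    ← Finset.mul_sum]
  have hc : s * c + t * c = c := by rw [← add_mul, hst, one_mul]
  linarith [mul_le_mul_of_nonneg_left hxs hs, mul_le_mul_of_nonneg_left hys ht]

theorem zero_mem_cornerSimplex {c : ℝ} (hc : 0 ≤ c) : (0 : ι → ℝ) ∈ cornerSimplex ι c :=
  ⟨fun _ => le_rfl, by simpa using hc⟩

theorem cornerSimplex_one_eq_convexHull [DecidableEq ι] :
    cornerSimplex ι 1 = convexHull ℝ (insert 0 (range fun i => Pi.single i 1)) := by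
  refine subset_antisymm ?_ (convexHull_min ?_ (convex_cornerSimplex 1))
  · rintro x ⟨hx0, hxs⟩
    have h := (convex_convexHull ℝ (insert (0 : ι → ℝ) (range fun i => Pi.single i 1))).sum_mem
      (t := Finset.univ) (w := Option.elim' (1 - ∑ i, x i) x)
      (z := Option.elim' 0 fun i => Pi.single i 1)
      (by rintro (_ | i) -; exacts [sub_nonneg.2 hxs, hx0 i])
      (by simp [Fintype.sum_option])
      (by rintro (_ | i) - <;> apply subset_convexHull <;> simp)
    convert h using 1
    ext j
    simp [Fintype.sum_option, Finset.sum_apply, Pi.single_apply]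
  · rintro _ (rfl | ⟨i, rfl⟩)
    · exact zero_mem_cornerSimplex zero_le_one
    · refine ⟨fun j => ?_, by simp⟩
      by_cases h : j = i <;> simp [h]

theorem smul_cornerSimplex_one {a : ℝ} (ha : 0 ≤ a) :
    a • cornerSimplex ι 1 = cornerSimplex ι a := by
  rcases ha.eq_or_lt with rfl | ha
  · rw [zero_smul_set ⟨0, zero_mem_cornerSimplex zero_le_one⟩]
    ext x
    simp only [cornerSimplex, mem_zero, mem_ofPred_eq]
    constructor
    · rintro rfl; simp
    · rintro ⟨hx0, hxs⟩
      funext i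
      exact (Finset.sum_eq_zero_iff_of_nonneg fun i _ => hx0 i).1
        (le_antisymm hxs (Finset.sum_nonneg fun i _ => hx0 i)) i (Finset.mem_univ i)
  · ext x
    simp only [mem_smul_set_iff_inv_smul_mem₀ ha.ne', cornerSimplex, mem_ofPred_eq,
      Pi.smul_apply, smul_eq_mul, ← Finset.mul_sum]
    rw [inv_mul_le_iff₀ ha, mul_one]
    simp only [inv_pos, ha, mul_nonneg_iff_of_pos_left]

theorem cornerSimplex_add_neg_cornerSimplex (a b : ℝ) :
    cornerSimplex ι a + -cornerSimplex ι b = posNegSimplex ι a b := by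
  ext x
  simp only [mem_add, mem_neg]
  constructor
  · rintro ⟨u, ⟨hu0, hus⟩, v, ⟨hv0, hvs⟩, rfl⟩
    have hv : ∀ i, v i ≤ 0 := fun i => neg_nonneg.1 (hv0 i)
    refine ⟨(Finset.sum_le_sum fun i _ => ?_).trans hus,
      (Finset.sum_le_sum fun i _ => ?_).trans hvs⟩
    · exact sup_le (by simp only [Pi.add_apply]; linarith [hv i]) (hu0 i)
    · exact sup_le (by simp only [Pi.add_apply, Pi.neg_apply]; linarith [hu0 i]) (hv0 i)
  · rintro ⟨hpos, hneg⟩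
    refine ⟨fun i => (x i)⁺, ⟨fun i => posPart_nonneg _, hpos⟩,
      fun i => -(x i)⁻, ⟨fun i => by simp [negPart_nonneg], by simpa using hneg⟩, ?_⟩
    funext i
    simp [← sub_eq_add_neg, posPart_sub_negPart]

theorem smul_cornerSimplex_add_smul_neg {a b : ℝ} (ha : 0 ≤ a) (hb : 0 ≤ b) :
    a • cornerSimplex ι 1 + b • -cornerSimplex ι 1 = posNegSimplex ι a b := by
  rw [smul_set_neg, smul_cornerSimplex_one ha, smul_cornerSimplex_one hb,
    cornerSimplex_add_neg_cornerSimplex]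

theorem nonneg_of_mem_posNegSimplex {a b : ℝ} {x : ι → ℝ} (hx : x ∈ posNegSimplex ι a b) :
    0 ≤ a ∧ 0 ≤ b :=
  ⟨(Finset.sum_nonneg fun i _ => posPart_nonneg (x i)).trans hx.1,
    (Finset.sum_nonneg fun i _ => negPart_nonneg (x i)).trans hx.2⟩

end

theorem volume_posNegSimplex_succ (n : ℕ) (a b : ℝ) :
    volume (posNegSimplex (Fin (n + 1)) a b) =
      ∫⁻ t, volume (posNegSimplex (Fin n) (a - t⁺) (b - t⁻)) := by
  set S : Set (ℝ × (Fin n → ℝ)) :=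
    {q | q.1⁺ + ∑ i, (q.2 i)⁺ ≤ a ∧ q.1⁻ + ∑ i, (q.2 i)⁻ ≤ b}
  have hS : MeasurableSet S := by
    simp only [S, ofPred_and]
    exact (measurableSet_le (by fun_prop) measurable_const).inter
      (measurableSet_le (by fun_prop) measurable_const)
  have hpre : posNegSimplex (Fin (n + 1)) a b =
      MeasurableEquiv.piFinSuccAbove (fun _ => ℝ) 0 ⁻¹' S := by
    ext x
    simp [posNegSimplex, S, Fin.sum_univ_succAbove _ 0, Fin.tail]
  rw [hpre, (volume_preserving_piFinSuccAbove (fun _ => ℝ) 0).measure_preimage_equiv,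
    Measure.volume_eq_prod, Measure.prod_apply hS]
  congr! with t
  ext y
  simp only [S, posNegSimplex, mem_preimage, mem_ofPred_eq]
  constructor <;> rintro ⟨h1, h2⟩ <;> constructor <;> linarith

theorem volume_posNegSimplex_fin_zero {a b : ℝ} (ha : 0 ≤ a) (hb : 0 ≤ b) :
    volume (posNegSimplex (Fin 0) a b) = 1 := by
  have : posNegSimplex (Fin 0) a b = univ := by
    ext x; simp [posNegSimplex, ha, hb]
  rw [this, volume_pi, Measure.pi_univ]; simp

theorem volume_posNegSimplex_succ_eq_ofReal {n : ℕ} {p : ℝ → ℝ → ℝ}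
    (hpc : Continuous (Function.uncurry p)) (hp0 : ∀ a b, 0 ≤ a → 0 ≤ b → 0 ≤ p a b)
    (hp : ∀ a b, 0 ≤ a → 0 ≤ b → volume (posNegSimplex (Fin n) a b) = ENNReal.ofReal (p a b))
    {a b : ℝ} (ha : 0 ≤ a) (hb : 0 ≤ b) :
    volume (posNegSimplex (Fin (n + 1)) a b) =
      ENNReal.ofReal ((∫ t in (0)..a, p t b) + ∫ t in (0)..b, p a t) := by
  set f : ℝ → ℝ := fun t => p (a - t⁺) (b - t⁻)
  have hf : Continuous f := hpc.comp (f := fun t => (a - t⁺, b - t⁻)) (by fun_prop)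
  have hslice_nonneg : ∀ t ∈ Icc (-b) a, 0 ≤ a - t⁺ ∧ 0 ≤ b - t⁻ := fun t ht => by
    rw [posPart_def, negPart_def]
    exact ⟨sub_nonneg.2 (sup_le ht.2 ha), sub_nonneg.2 (sup_le (by linarith [ht.1]) hb)⟩
  have hsupp : (Function.support fun t => volume (posNegSimplex (Fin n) (a - t⁺) (b - t⁻))) ⊆
      Icc (-b) a := fun t ht => by
    obtain ⟨x, hx⟩ := nonempty_of_measure_ne_zero ht
    have := nonneg_of_mem_posNegSimplex hx
    exact ⟨by linarith [neg_le_negPart t], by linarith [le_posPart t]⟩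
  calc volume (posNegSimplex (Fin (n + 1)) a b)
      = ∫⁻ t in Icc (-b) a, volume (posNegSimplex (Fin n) (a - t⁺) (b - t⁻)) := by
        rw [volume_posNegSimplex_succ, setLIntegral_eq_of_support_subset hsupp]
    _ = ∫⁻ t in Icc (-b) a, ENNReal.ofReal (f t) :=
        setLIntegral_congr_fun measurableSet_Icc fun t ht =>
          hp _ _ (hslice_nonneg t ht).1 (hslice_nonneg t ht).2
    _ = ENNReal.ofReal (∫ t in (-b)..a, f t) := by
        rw [intervalIntegral.integral_of_le (by linarith), ← integral_Icc_eq_integral_Ioc,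
          ofReal_integral_eq_lintegral_ofReal hf.integrableOn_Icc]
        exact (ae_restrict_iff' measurableSet_Icc).2 (ae_of_all _ fun t ht =>
          hp0 _ _ (hslice_nonneg t ht).1 (hslice_nonneg t ht).2)
    _ = ENNReal.ofReal ((∫ t in (0)..a, p (a - t) b) + ∫ t in (-b)..0, p a (b + t)) := by
        rw [← intervalIntegral.integral_add_adjacent_intervals (b := 0)
          (hf.intervalIntegrable _ _) (hf.intervalIntegrable _ _), add_comm]
        congr 2 <;> refine intervalIntegral.integral_congr fun t ht => ?_
        · rw [uIcc_of_le ha] at ht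
          simp [f, posPart_eq_self.2 ht.1, negPart_eq_zero.2 ht.1]
        · rw [uIcc_of_le (by linarith)] at ht
          simp [f, posPart_eq_zero.2 ht.2, negPart_eq_neg.2 ht.2, sub_neg_eq_add]
    _ = _ := by
        rw [intervalIntegral.integral_comp_sub_left (fun t => p t b),
          intervalIntegral.integral_comp_add_left (fun t => p a t)]
        simp

theorem volume_posNegSimplex_fin_three {a b : ℝ} (ha : 0 ≤ a) (hb : 0 ≤ b) :
    volume (posNegSimplex (Fin 3) a b) =
      ENNReal.ofReal ((a ^ 3 + 9 * a ^ 2 * b + 9 * a * b ^ 2 + b ^ 3) / 6) := by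
  have h1 : ∀ a b : ℝ, 0 ≤ a → 0 ≤ b →
      volume (posNegSimplex (Fin 1) a b) = ENNReal.ofReal (a + b) := fun a b ha hb => by
    rw [volume_posNegSimplex_succ_eq_ofReal (p := fun _ _ => 1) continuous_const
      (fun _ _ _ _ => zero_le_one) (fun a b ha hb => by
        rw [volume_posNegSimplex_fin_zero ha hb, ENNReal.ofReal_one]) ha hb]
    simp
  have h2 : ∀ a b : ℝ, 0 ≤ a → 0 ≤ b → volume (posNegSimplex (Fin 2) a b) =
      ENNReal.ofReal ((a ^ 2 + 4 * a * b + b ^ 2) / 2) := fun a b ha hb => by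
    rw [volume_posNegSimplex_succ_eq_ofReal (p := fun a b => a + b) (by fun_prop)
      (fun _ _ ha hb => by positivity) h1 ha hb,
      intervalIntegral.integral_comp_add_left (fun t => t)]
    simp (disch := apply Continuous.intervalIntegrable; fun_prop) [intervalIntegral.integral_add]
    ring_nf
  rw [volume_posNegSimplex_succ_eq_ofReal (p := fun a b => (a ^ 2 + 4 * a * b + b ^ 2) / 2)
    (by fun_prop) (fun _ _ ha hb => by positivity) h2 ha hb]
  simp (disch := apply Continuous.intervalIntegrable; fun_prop)
    [intervalIntegral.integral_add, intervalIntegral.integral_const_mul (𝕜 := ℝ),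
      intervalIntegral.integral_mul_const (𝕜 := ℝ)]
  ring_nf

theorem LinearMap.image_smul_add_smul_neg {R E F : Type*} [Ring R] [AddCommGroup E] [Module R E]
    [AddCommGroup F] [Module R F] (f : E →ₗ[R] F) (a b : R) (s : Set E) :
    f '' (a • s + b • -s) = a • f '' s + b • -(f '' s) := by
  rw [image_add, image_smul_set, image_smul_set, image_neg]

theorem volume_image_toLp {ι : Type*} [Fintype ι] (s : Set (ι → ℝ)) :
    volume (WithLp.toLp 2 '' s : Set (EuclideanSpace ℝ ι)) = volume s := by
  rw [← (EuclideanSpace.volume_preserving_symm_measurableEquiv_toLp ι).measure_preimage_equiv s,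
    ← MeasurableEquiv.image_eq_preimage_symm]
  rfl

noncomputable def tetraMatrix : Matrix (Fin 3) (Fin 3) ℝ :=
  !![1, 1/2, 1/2; 0, √3/2, √3/6; 0, 0, √(2/3)]

noncomputable def tetraMap : (Fin 3 → ℝ) →ₗ[ℝ] EuclideanSpace ℝ (Fin 3) :=
  (WithLp.linearEquiv 2 ℝ (Fin 3 → ℝ)).symm.toLinearMap ∘ₗ Matrix.toLin' tetraMatrix

theorem det_tetraMatrix : tetraMatrix.det = √2 / 2 := by
  simp [Matrix.det_fin_three, tetraMatrix]

theorem volume_image_tetraMap (s : Set (Fin 3 → ℝ)) :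
    volume (tetraMap '' s) = ENNReal.ofReal (√2 / 2) * volume s := by
  have : ⇑(WithLp.linearEquiv 2 ℝ (Fin 3 → ℝ)).symm = WithLp.toLp 2 := rfl
  simp only [tetraMap, LinearMap.coe_comp, LinearEquiv.coe_coe, this, image_comp]
  rw [volume_image_toLp, Measure.addHaar_image_linearMap, LinearMap.det_toLin', det_tetraMatrix,
    abs_of_nonneg (by positivity)]

theorem T_eq_image_cornerSimplex : T = tetraMap '' cornerSimplex (Fin 3) 1 := by
  have hvert : tetraMap ∘ (fun i => Pi.single i 1) =
      ![!₂[1, 0, 0], !₂[1/2, √3 / 2, 0], !₂[1/2, √3 / 6, √(2/3)]] := by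
    funext j; fin_cases j <;> ext i <;> fin_cases i <;> simp [tetraMap, tetraMatrix]
  rw [T, cornerSimplex_one_eq_convexHull, LinearMap.image_convexHull, image_insert_eq, map_zero,
    ← range_comp, hvert, Matrix.range_cons, Matrix.range_cons, Matrix.range_cons_empty,
    singleton_union, singleton_union]
  congr
  ext i; fin_cases i <;> rfl

theorem volume_cornerSimplex_fin_three :
    volume (cornerSimplex (Fin 3) 1) = ENNReal.ofReal (1 / 6) := by
  have h := smul_cornerSimplex_add_smul_neg (ι := Fin 3) zero_le_one le_rfl
  rw [one_smul, zero_smul_set ⟨0, by simpa using zero_mem_cornerSimplex zero_le_one⟩,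
    add_zero] at h
  rw [h, volume_posNegSimplex_fin_three zero_le_one le_rfl]
  norm_num

theorem volume_minkowski_sum_tetrahedron_inverted (α : ℝ) (h0 : 0 ≤ α) (h1 : α ≤ 1) :
    volume (α • T + ((1 - α) / 2) • (-T)) =
      ENNReal.ofReal
        (α ^ 3 + 9 / 2 * α ^ 2 * (1 - α) + 9 / 4 * α * (1 - α) ^ 2 + 1 / 8 * (1 - α) ^ 3) *
        volume T ∧
    volume T = ENNReal.ofReal (Real.sqrt 2 / 12) := by
  have hβ : 0 ≤ (1 - α) / 2 := by linarith
  have hT : volume T = ENNReal.ofReal (√2 / 12) := by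
    rw [T_eq_image_cornerSimplex, volume_image_tetraMap, volume_cornerSimplex_fin_three,
      ← ENNReal.ofReal_mul (by positivity)]
    ring_nf
  refine ⟨?_, hT⟩
  rw [hT, T_eq_image_cornerSimplex, ← LinearMap.image_smul_add_smul_neg,
    smul_cornerSimplex_add_smul_neg h0 hβ, volume_image_tetraMap,
    volume_posNegSimplex_fin_three h0 hβ, ← ENNReal.ofReal_mul (by positivity),
    ← ENNReal.ofReal_mul' (by positivity)]
  ring_nf
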